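/- In any controlled hidden Markov model with output-feedback policy over horizon T ≥ 1, the following exchange identity holds: H(X_T | Y^{T-1}, U^{T-1}) − H(X_T | X^{T-1}, Y^{T-1}, U^{T-1}) = H(X^{T-1} | Y^{T-1}, U^{T-1}) − H(X^{T-1} | X_T, Y^T, U^{T-1}). -/

import Mathlib

open Finset

/-- Trajectory space of a controlled HMM over horizon `T`:
states `x_0,…,x_T`, measurements `y_0,…,y_T`, controls `u_0,…,u_{T-1}`. -/
abbrev Traj (T : ℕ) (X Y U : Type*) : Type _ :=
  (Fin (T + 1) → X) × (Fin (T + 1) → Y) × (Fin T → U)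

/-- A controlled hidden Markov model with output-feedback policy over horizon `T`,
with finite state space `X`, measurement space `Y` and control space `U`.
`f t x' x u = f_t(x' | x, u)`, `g0 y x = g₀(y | x)`, `g t y x u = g_{t+1}(y | x, u_t)`,
and `pol t a ys us = μ_t(a | y^t, u^{t-1})` (causality is imposed by `pol_causal`). -/
structure CHMM (T : ℕ) (X Y U : Type*) [Fintype X] [Fintype Y] [Fintype U] where
  p0 : X → ℝ
  f : Fin T → X → X → U → ℝ
  g0 : Y → X → ℝ
  g : Fin T → Y → X → U → ℝ
  pol : Fin T → U → (Fin (T + 1) → Y) → (Fin T → U) → ℝ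
  p0_nonneg : ∀ x, 0 ≤ p0 x
  p0_sum : ∑ x, p0 x = 1
  f_nonneg : ∀ t x' x u, 0 ≤ f t x' x u
  f_sum : ∀ t x u, ∑ x', f t x' x u = 1
  g0_nonneg : ∀ y x, 0 ≤ g0 y x
  g0_sum : ∀ x, ∑ y, g0 y x = 1
  g_nonneg : ∀ t y x u, 0 ≤ g t y x u
  g_sum : ∀ t x u, ∑ y, g t y x u = 1
  pol_nonneg : ∀ t a ys us, 0 ≤ pol t a ys us
  pol_sum : ∀ t ys us, ∑ a, pol t a ys us = 1
  pol_causal : ∀ (t : Fin T) (a : U) (ys ys' : Fin (T + 1) → Y) (us us' : Fin T → U),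
    (∀ i : Fin (T + 1), (i : ℕ) ≤ (t : ℕ) → ys i = ys' i) →
    (∀ i : Fin T, (i : ℕ) < (t : ℕ) → us i = us' i) →
    pol t a ys us = pol t a ys' us'

variable {T : ℕ} {X Y U : Type*} [Fintype X] [Fintype Y] [Fintype U]
  [DecidableEq X] [DecidableEq Y] [DecidableEq U]

/-- The joint probability mass function on trajectories induced by a controlled HMM. -/
noncomputable def CHMM.p (M : CHMM T X Y U) (ω : Traj T X Y U) : ℝ :=
  M.p0 (ω.1 0) * M.g0 (ω.2.1 0) (ω.1 0) *
    ∏ t : Fin T,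
      (M.pol t (ω.2.2 t) ω.2.1 ω.2.2 *
        M.f t (ω.1 t.succ) (ω.1 t.castSucc) (ω.2.2 t) *
        M.g t (ω.2.1 t.succ) (ω.1 t.succ) (ω.2.2 t))

/-- `M.prob A a = P(A = a)` for a random variable `A` on trajectory space. -/
noncomputable def CHMM.prob (M : CHMM T X Y U) {α : Type*} [DecidableEq α]
    (A : Traj T X Y U → α) (a : α) : ℝ :=
  ∑ ω : Traj T X Y U, if A ω = a then M.p ω else 0

/-- `M.cprob A a B b = P(A = a | B = b) = P(A = a, B = b) / P(B = b)`. -/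
noncomputable def CHMM.cprob (M : CHMM T X Y U) {α β : Type*} [DecidableEq α] [DecidableEq β]
    (A : Traj T X Y U → α) (a : α) (B : Traj T X Y U → β) (b : β) : ℝ :=
  M.prob (fun ω => (A ω, B ω)) (a, b) / M.prob B b

/-- Shannon entropy `H(A)` of a random variable `A` (with `0 log 0 = 0`, as `Real.log 0 = 0`). -/
noncomputable def CHMM.entropy (M : CHMM T X Y U) {α : Type*} [Fintype α] [DecidableEq α]
    (A : Traj T X Y U → α) : ℝ :=
  -∑ a : α, M.prob A a * Real.log (M.prob A a)

/-- Conditional entropy `H(A | B) = -∑_{a,b} P(A=a,B=b) log P(A=a|B=b)`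
(terms with `P(A=a,B=b) = 0`, in particular those with `P(B=b) = 0`, vanish). -/
noncomputable def CHMM.condEnt (M : CHMM T X Y U) {α β : Type*}
    [Fintype α] [DecidableEq α] [Fintype β] [DecidableEq β]
    (A : Traj T X Y U → α) (B : Traj T X Y U → β) : ℝ :=
  -∑ a : α, ∑ b : β,
      M.prob (fun ω => (A ω, B ω)) (a, b) *
        Real.log (M.prob (fun ω => (A ω, B ω)) (a, b) / M.prob B b)

/-- Conditional mutual information `I(A ; B | C) = H(A | C) - H(A | B, C)`. -/
noncomputable def CHMM.condMI (M : CHMM T X Y U) {α β γ : Type*}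
    [Fintype α] [DecidableEq α] [Fintype β] [DecidableEq β] [Fintype γ] [DecidableEq γ]
    (A : Traj T X Y U → α) (B : Traj T X Y U → β) (C : Traj T X Y U → γ) : ℝ :=
  M.condEnt A C - M.condEnt A (fun ω => (B ω, C ω))

/-- Point-wise conditional entropy `h(A | b) = -∑_a P(A=a|B=b) log P(A=a|B=b)`. -/
noncomputable def CHMM.pcondEnt (M : CHMM T X Y U) {α β : Type*}
    [Fintype α] [DecidableEq α] [DecidableEq β]
    (A : Traj T X Y U → α) (B : Traj T X Y U → β) (b : β) : ℝ :=
  -∑ a : α, M.cprob A a B b * Real.log (M.cprob A a B b)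

/-- Point-wise conditional entropy of `A` given the random variable `A'` and the
realization `B = b`:  `h(A | A', b) = -∑_{a,a'} P(A=a,A'=a'|B=b) log P(A=a|A'=a',B=b)`. -/
noncomputable def CHMM.pcondEnt2 (M : CHMM T X Y U) {α α' β : Type*}
    [Fintype α] [DecidableEq α] [Fintype α'] [DecidableEq α'] [DecidableEq β]
    (A : Traj T X Y U → α) (A' : Traj T X Y U → α') (B : Traj T X Y U → β) (b : β) : ℝ :=
  -∑ a : α, ∑ a' : α',
      M.cprob (fun ω => (A ω, A' ω)) (a, a') B b *
        Real.log (M.prob (fun ω => (A ω, (A' ω, B ω))) (a, (a', b)) /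
          M.prob (fun ω => (A' ω, B ω)) (a', b))

/-- The state history `X^{n-1} = (X_0, …, X_{n-1})` as a random variable. -/
def Xpref (T : ℕ) {X Y U : Type*} (n : ℕ) (h : n ≤ T + 1) :
    Traj T X Y U → (Fin n → X) :=
  fun ω i => ω.1 (Fin.castLE h i)

/-- The measurement history `Y^{n-1} = (Y_0, …, Y_{n-1})` as a random variable. -/
def Ypref (T : ℕ) {X Y U : Type*} (n : ℕ) (h : n ≤ T + 1) :
    Traj T X Y U → (Fin n → Y) :=
  fun ω i => ω.2.1 (Fin.castLE h i)

/-- The control history `U^{n-1} = (U_0, …, U_{n-1})` as a random variable. -/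
def Upref (T : ℕ) {X Y U : Type*} (n : ℕ) (h : n ≤ T) :
    Traj T X Y U → (Fin n → U) :=
  fun ω i => ω.2.2 (Fin.castLE h i)

/-- The state `X_t` as a random variable. -/
def Xat (T : ℕ) {X Y U : Type*} (t : ℕ) (h : t < T + 1) : Traj T X Y U → X :=
  fun ω => ω.1 ⟨t, h⟩

/-- The measurement `Y_t` as a random variable. -/
def Yat (T : ℕ) {X Y U : Type*} (t : ℕ) (h : t < T + 1) : Traj T X Y U → Y :=
  fun ω => ω.2.1 ⟨t, h⟩

/-- The control `U_t` as a random variable. -/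
def Uat (T : ℕ) {X Y U : Type*} (t : ℕ) (h : t < T) : Traj T X Y U → U :=
  fun ω => ω.2.2 ⟨t, h⟩

/-!
Both sides are conditional mutual informations given `(Y^{T-1}, U^{T-1})`: the left one is
`I(X_T ; X^{T-1} | ·)`, the right one is `I(X^{T-1} ; X_T | ·)` once the last measurement `Y_T`
is dropped from `H(X^{T-1} | X_T, Y^T, U^{T-1})`. Dropping it is harmless: `Y_T` is drawn from
`g(· | X_T, U_{T-1})` and, by causality of the policy, no other factor of the trajectory density
involves it, so `X^{T-1}` and `Y_T` are conditionally independent given `(X_T, Y^{T-1}, U^{T-1})`.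
What remains is the symmetry of conditional mutual information, a consequence of
`H(A | B) = H(A, B) - H(B)`.
-/

def Traj.splitLast (T : ℕ) (X Y U : Type*) :
    Traj T X Y U ≃ (Fin T → X) × Y × X × (Fin T → Y) × (Fin T → U) where
  toFun ω := (Fin.init ω.1, ω.2.1 (Fin.last T), ω.1 (Fin.last T), Fin.init ω.2.1, ω.2.2)
  invFun z := (Fin.snoc z.1 z.2.2.1, Fin.snoc z.2.2.2.1 z.2.1, z.2.2.2.2)
  left_inv ω := by simp
  right_inv z := by simp

namespace CHMM

section Entropy

variable {T : ℕ} {X Y U : Type*} [Fintype X] [Fintype Y] [Fintype U] (M : CHMM T X Y U)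
  {α β γ δ : Type*} [DecidableEq α] [DecidableEq β] [DecidableEq γ] [DecidableEq δ]

theorem p_nonneg (ω : Traj T X Y U) : 0 ≤ M.p ω :=
  mul_nonneg (mul_nonneg (M.p0_nonneg _) (M.g0_nonneg _ _)) <| prod_nonneg fun _ _ =>
    mul_nonneg (mul_nonneg (M.pol_nonneg _ _ _ _) (M.f_nonneg _ _ _ _)) (M.g_nonneg _ _ _ _)

theorem prob_nonneg (A : Traj T X Y U → α) (a : α) : 0 ≤ M.prob A a :=
  sum_nonneg fun ω _ => by split_ifs <;> simp [M.p_nonneg ω]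

theorem prob_mono {A : Traj T X Y U → α} {B : Traj T X Y U → β} {a : α} {b : β}
    (h : ∀ ω, A ω = a → B ω = b) : M.prob A a ≤ M.prob B b :=
  sum_le_sum fun ω _ => by split_ifs <;> simp_all [M.p_nonneg ω]

theorem prob_congr {A : Traj T X Y U → α} {B : Traj T X Y U → β} {a : α} {b : β}
    (h : ∀ ω, A ω = a ↔ B ω = b) : M.prob A a = M.prob B b :=
  le_antisymm (M.prob_mono fun ω => (h ω).1) (M.prob_mono fun ω => (h ω).2)

theorem prob_equiv (e : Traj T X Y U ≃ α) (a : α) : M.prob e a = M.p (e.symm a) := by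
  rw [CHMM.prob, sum_eq_single (e.symm a)
    (fun ω _ hω => if_neg fun h => hω (e.eq_symm_apply.2 h)) (by simp),
    if_pos (e.apply_symm_apply a)]

theorem prob_comp_equiv (A : Traj T X Y U → α) (e : α ≃ β) (a : α) :
    M.prob (fun ω => e (A ω)) (e a) = M.prob A a :=
  M.prob_congr fun _ => e.apply_eq_iff_eq

theorem prob_snd_ne_zero {A : Traj T X Y U → α} {B : Traj T X Y U → β} {a : α} {b : β}
    (h : M.prob (fun ω => (A ω, B ω)) (a, b) ≠ 0) : M.prob B b ≠ 0 :=
  (((M.prob_nonneg _ _).lt_of_ne' h).trans_le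
    (M.prob_mono fun _ hω => (Prod.mk.inj hω).2)).ne'

theorem sum_prob_pair_left [Fintype α] (A : Traj T X Y U → α) (B : Traj T X Y U → β)
    (b : β) :
    ∑ a, M.prob (fun ω => (A ω, B ω)) (a, b) = M.prob B b := by
  simp only [CHMM.prob, Prod.mk.injEq, ite_and]
  rw [sum_comm]
  simp [sum_ite_eq]

theorem sum_prob_pair_mid [Fintype δ] (A : Traj T X Y U → α) (D : Traj T X Y U → δ)
    (C : Traj T X Y U → γ) (a : α) (c : γ) :
    ∑ d, M.prob (fun ω => (A ω, D ω, C ω)) (a, d, c)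
      = M.prob (fun ω => (A ω, C ω)) (a, c) := by
  rw [← M.sum_prob_pair_left D (fun ω => (A ω, C ω))]
  exact sum_congr rfl fun d _ => M.prob_congr fun ω => by simp only [Prod.mk.injEq]; tauto

theorem entropy_comp_equiv [Fintype α] [Fintype β] (A : Traj T X Y U → α) (e : α ≃ β) :
    M.entropy (fun ω => e (A ω)) = M.entropy A := by
  simp only [CHMM.entropy, ← e.sum_comp, M.prob_comp_equiv]

theorem condEnt_eq_entropy_sub [Fintype α] [Fintype β] (A : Traj T X Y U → α)
    (B : Traj T X Y U → β) :
    M.condEnt A B = M.entropy (fun ω => (A ω, B ω)) - M.entropy B := by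
  have hterm : ∀ a b, M.prob (fun ω => (A ω, B ω)) (a, b) *
        Real.log (M.prob (fun ω => (A ω, B ω)) (a, b) / M.prob B b)
      = M.prob (fun ω => (A ω, B ω)) (a, b) *
          Real.log (M.prob (fun ω => (A ω, B ω)) (a, b))
        - M.prob (fun ω => (A ω, B ω)) (a, b) * Real.log (M.prob B b) := by
    intro a b
    by_cases h : M.prob (fun ω => (A ω, B ω)) (a, b) = 0
    · simp [h]
    · rw [Real.log_div h (M.prob_snd_ne_zero h), mul_sub]
  have hB : ∑ a, ∑ b, M.prob (fun ω => (A ω, B ω)) (a, b) * Real.log (M.prob B b)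
      = ∑ b, M.prob B b * Real.log (M.prob B b) := by
    rw [sum_comm]
    simp only [← sum_mul, M.sum_prob_pair_left]
  simp only [CHMM.condEnt, CHMM.entropy, hterm, sum_sub_distrib, Fintype.sum_prod_type, hB]
  ring

theorem condEnt_comp_equiv_right [Fintype α] [Fintype β] [Fintype γ] (A : Traj T X Y U → α)
    (B : Traj T X Y U → β) (e : β ≃ γ) :
    M.condEnt A (fun ω => e (B ω)) = M.condEnt A B := by
  rw [condEnt_eq_entropy_sub, condEnt_eq_entropy_sub, M.entropy_comp_equiv B e,
    ← M.entropy_comp_equiv (fun ω => (A ω, B ω)) ((Equiv.refl α).prodCongr e)]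
  rfl

theorem condMI_comm [Fintype α] [Fintype β] [Fintype γ] (A : Traj T X Y U → α)
    (B : Traj T X Y U → β) (C : Traj T X Y U → γ) :
    M.condMI A B C = M.condMI B A C := by
  let swap : α × β × γ ≃ β × α × γ :=
    ⟨fun x => (x.2.1, x.1, x.2.2), fun x => (x.2.1, x.1, x.2.2), fun _ => rfl, fun _ => rfl⟩
  have hswap :
      M.entropy (fun ω => (B ω, A ω, C ω)) = M.entropy (fun ω => (A ω, B ω, C ω)) :=
    M.entropy_comp_equiv (fun ω => (A ω, B ω, C ω)) swap
  simp only [CHMM.condMI, condEnt_eq_entropy_sub]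
  linarith

theorem condEnt_pair_eq_of_factor [Fintype α] [Fintype γ] [Fintype δ] (A : Traj T X Y U → α)
    (D : Traj T X Y U → δ) (C : Traj T X Y U → γ) (k : δ → γ → ℝ)
    (h : ∀ a d c, M.prob (fun ω => (A ω, D ω, C ω)) (a, d, c)
      = M.prob (fun ω => (A ω, C ω)) (a, c) * k d c) :
    M.condEnt A (fun ω => (D ω, C ω)) = M.condEnt A C := by
  have hDC : ∀ d c, M.prob (fun ω => (D ω, C ω)) (d, c) = M.prob C c * k d c := by
    intro d c
    rw [← M.sum_prob_pair_left A (fun ω => (D ω, C ω)), ← M.sum_prob_pair_left A C, sum_mul]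
    exact sum_congr rfl fun a _ => h a d c
  have hterm : ∀ a d c, M.prob (fun ω => (A ω, D ω, C ω)) (a, d, c) *
        Real.log (M.prob (fun ω => (A ω, D ω, C ω)) (a, d, c) /
          M.prob (fun ω => (D ω, C ω)) (d, c))
      = M.prob (fun ω => (A ω, D ω, C ω)) (a, d, c) *
        Real.log (M.prob (fun ω => (A ω, C ω)) (a, c) / M.prob C c) := by
    intro a d c
    by_cases hk : k d c = 0
    · simp [h, hk]
    · rw [h a d c, hDC, mul_div_mul_right _ _ hk]
  simp only [CHMM.condEnt, Fintype.sum_prod_type, hterm]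
  congr 1
  refine sum_congr rfl fun a _ => ?_
  rw [sum_comm]
  simp only [← sum_mul, M.sum_prob_pair_mid]

end Entropy

-- The five-component random variables below exceed the default instance size for `DecidableEq`.
set_option synthInstance.maxSize 256

theorem prob_Xpref_Yat_Xat_Ypref_Upref (M : CHMM T X Y U) (a : Fin T → X) (d : Y) (x : X)
    (y : Fin T → Y) (u : Fin T → U) :
    M.prob (fun ω => (Xpref T T (Nat.le_succ T) ω, Yat T T (Nat.lt_succ_self T) ω,
        Xat T T (Nat.lt_succ_self T) ω, Ypref T T (Nat.le_succ T) ω, Upref T T le_rfl ω))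
        (a, d, x, y, u)
      = M.p (Fin.snoc a x, Fin.snoc y d, u) :=
  M.prob_equiv (Traj.splitLast T X Y U) _

section LastMeasurement

variable {n : ℕ} {X Y U : Type*} [Fintype X] [Fintype Y] [Fintype U] (M : CHMM (n + 1) X Y U)

theorem pol_snoc_measurement (t : Fin (n + 1)) (a : U) (ys : Fin (n + 1) → Y) (d d' : Y)
    (us : Fin (n + 1) → U) : M.pol t a (Fin.snoc ys d) us = M.pol t a (Fin.snoc ys d') us :=
  M.pol_causal t a _ _ us us (fun i hi => by simp [Fin.snoc, show (i : ℕ) < n + 1 by omega])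
    fun _ _ => rfl

theorem p_snoc_mul_g (xs : Fin (n + 2) → X) (ys : Fin (n + 1) → Y) (d d' : Y)
    (us : Fin (n + 1) → U) :
    M.p (xs, Fin.snoc ys d, us) * M.g (Fin.last n) d' (xs (Fin.last _)) (us (Fin.last n))
      = M.p (xs, Fin.snoc ys d', us) * M.g (Fin.last n) d (xs (Fin.last _)) (us (Fin.last n)) := by
  have snoc_zero (e : Y) : (Fin.snoc ys e : Fin (n + 2) → Y) 0 = ys 0 :=
    Fin.snoc_castSucc (α := fun _ => Y) (p := ys) (x := e) (i := 0)
  simp only [CHMM.p, Fin.prod_univ_castSucc, Fin.succ_castSucc, Fin.succ_last, Fin.snoc_castSucc,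
    Fin.snoc_last, snoc_zero, M.pol_snoc_measurement _ _ ys d d']
  ring

theorem p_snoc_eq (xs : Fin (n + 2) → X) (ys : Fin (n + 1) → Y) (d : Y)
    (us : Fin (n + 1) → U) :
    M.p (xs, Fin.snoc ys d, us)
      = (∑ d', M.p (xs, Fin.snoc ys d', us)) *
        M.g (Fin.last n) d (xs (Fin.last _)) (us (Fin.last n)) := by
  rw [sum_mul, ← mul_one (M.p _), ← M.g_sum (Fin.last n) (xs (Fin.last _)) (us (Fin.last n)),
    mul_sum]
  exact sum_congr rfl fun d' _ => M.p_snoc_mul_g xs ys d d' us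

variable [DecidableEq X] [DecidableEq Y] [DecidableEq U]

theorem prob_Xpref_Yat_eq_mul_g (a : Fin (n + 1) → X) (d : Y)
    (c : X × (Fin (n + 1) → Y) × (Fin (n + 1) → U)) :
    M.prob (fun ω => (Xpref (n + 1) (n + 1) (Nat.le_succ _) ω,
        Yat (n + 1) (n + 1) (Nat.lt_succ_self _) ω, Xat (n + 1) (n + 1) (Nat.lt_succ_self _) ω,
        Ypref (n + 1) (n + 1) (Nat.le_succ _) ω, Upref (n + 1) (n + 1) le_rfl ω)) (a, d, c)
      = M.prob (fun ω => (Xpref (n + 1) (n + 1) (Nat.le_succ _) ω,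
          Xat (n + 1) (n + 1) (Nat.lt_succ_self _) ω, Ypref (n + 1) (n + 1) (Nat.le_succ _) ω,
          Upref (n + 1) (n + 1) le_rfl ω)) (a, c)
        * M.g (Fin.last n) d c.1 (c.2.2 (Fin.last n)) := by
  rw [M.prob_Xpref_Yat_Xat_Ypref_Upref,
    ← M.sum_prob_pair_mid _ (Yat (n + 1) (n + 1) (Nat.lt_succ_self _))]
  simp only [M.prob_Xpref_Yat_Xat_Ypref_Upref]
  rw [M.p_snoc_eq, Fin.snoc_last]

theorem condEnt_Xpref_drop_lastMeasurement :
    M.condEnt (Xpref (n + 1) (n + 1) (Nat.le_succ _))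
        (fun ω => (Xat (n + 1) (n + 1) (Nat.lt_succ_self _) ω, Ypref (n + 1) (n + 2) le_rfl ω,
          Upref (n + 1) (n + 1) le_rfl ω))
      = M.condEnt (Xpref (n + 1) (n + 1) (Nat.le_succ _))
        (fun ω => (Xat (n + 1) (n + 1) (Nat.lt_succ_self _) ω,
          Ypref (n + 1) (n + 1) (Nat.le_succ _) ω, Upref (n + 1) (n + 1) le_rfl ω)) := by
  let snocMeas : Y × X × (Fin (n + 1) → Y) × (Fin (n + 1) → U) ≃
      X × (Fin (n + 2) → Y) × (Fin (n + 1) → U) :=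
    ⟨fun z => (z.2.1, Fin.snoc z.2.2.1 z.1, z.2.2.2),
      fun z => (z.2.1 (Fin.last _), z.1, Fin.init z.2.1, z.2.2),
      fun z => by simp, fun z => by simp⟩
  have hmeas : (fun ω => (Xat (n + 1) (n + 1) (Nat.lt_succ_self _) ω,
      Ypref (n + 1) (n + 2) le_rfl ω, Upref (n + 1) (n + 1) le_rfl ω))
      = fun ω => snocMeas (Yat (n + 1) (n + 1) (Nat.lt_succ_self _) ω,
        Xat (n + 1) (n + 1) (Nat.lt_succ_self _) ω, Ypref (n + 1) (n + 1) (Nat.le_succ _) ω,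
        Upref (n + 1) (n + 1) le_rfl ω) :=
    funext fun ω => Prod.ext rfl (Prod.ext (Fin.snoc_init_self ω.2.1).symm rfl)
  rw [hmeas, M.condEnt_comp_equiv_right,
    M.condEnt_pair_eq_of_factor _ _ _ _ M.prob_Xpref_Yat_eq_mul_g]

end LastMeasurement

end CHMM

/-- The exchange identity
`H(X_T | Y^{T-1}, U^{T-1}) − H(X_T | X^{T-1}, Y^{T-1}, U^{T-1})
  = H(X^{T-1} | Y^{T-1}, U^{T-1}) − H(X^{T-1} | X_T, Y^T, U^{T-1})`. -/
theorem smoother_entropy_exchange_identity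
    {T : ℕ} {X Y U : Type*} [Fintype X] [Fintype Y] [Fintype U]
    [DecidableEq X] [DecidableEq Y] [DecidableEq U]
    (hT : 1 ≤ T) (M : CHMM T X Y U) :
    M.condEnt (Xat T T (by omega))
        (fun ω => (Ypref T T (by omega) ω, Upref T T le_rfl ω))
      - M.condEnt (Xat T T (by omega))
        (fun ω => (Xpref T T (by omega) ω, Ypref T T (by omega) ω, Upref T T le_rfl ω))
    = M.condEnt (Xpref T T (by omega))
        (fun ω => (Ypref T T (by omega) ω, Upref T T le_rfl ω))
      - M.condEnt (Xpref T T (by omega))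
        (fun ω => (Xat T T (by omega) ω, Ypref T (T + 1) le_rfl ω, Upref T T le_rfl ω)) := by
  obtain ⟨n, rfl⟩ : ∃ n, T = n + 1 := ⟨T - 1, by omega⟩
  rw [M.condEnt_Xpref_drop_lastMeasurement]
  exact M.condMI_comm (Xat (n + 1) (n + 1) (Nat.lt_succ_self _))
    (Xpref (n + 1) (n + 1) (Nat.le_succ _))
    (fun ω => (Ypref (n + 1) (n + 1) (Nat.le_succ _) ω, Upref (n + 1) (n + 1) le_rfl ω))
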